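/- arXiv:1209.5568 — 5 statements merged into one kernel-verified Lean document; each statement's English description precedes it below -/
import Mathlib

section
/- Let N ≥ 1 and let |ψ⟩ be any unit vector in the Hilbert space ℂ^(2^N) of an N-qubit register. Then there exist N linear subspaces S_1, …, S_N of ℂ^(2^N), each of (complex) dimension 2^(N−1), such that the intersection ⋂_{k=1}^N S_k equals the one-dimensional span of |ψ⟩. -/
/-!
Extend `ψ` to a basis of `ℂ^(2^N)` indexed by bit strings `f : Fin N → Bool`, with `ψ` sitting
at the all-`false` string. Let `S k` be spanned by the basis vectors whose `k`-th bit is `false`: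
it has dimension `2^(N-1)`, and since intersections of coordinate subspaces are coordinate
subspaces, `⨅ k, S k` is spanned by the basis vectors with every bit `false`, i.e. by `ψ` alone.
-/

open Module Submodule

theorem Fintype.card_subtype_apply_eq {ι β : Type*} [Fintype ι] [DecidableEq ι] [Fintype β]
    [DecidableEq β] (i : ι) (x : β) :
    Fintype.card {f : ι → β // f i = x} = Fintype.card β ^ (Fintype.card ι - 1) := by
  rw [Fintype.card_subtype, ← Fintype.piFinset_univ]
  exact Fintype.card_filter_piFinset_const_eq_of_mem _ i (Finset.mem_univ x)

namespace Module.Basis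

section Semiring

variable {ι R M : Type*} [Semiring R] [AddCommMonoid M] [Module R M]

theorem iInf_span_image {κ : Type*} (b : Basis ι R M) (s : κ → Set ι) :
    ⨅ k, span R (b '' s k) = span R (b '' ⋂ k, s k) := by
  have hspan : ∀ t : Set ι,
      span R (b '' t) = (Finsupp.supported R R t).comap (b.repr : M →ₗ[R] ι →₀ R) := fun t => by
    rw [Finsupp.span_image_eq_map_linearCombination, ← b.coe_repr_symm,
      map_equiv_eq_comap_symm, LinearEquiv.symm_symm]
  simp only [hspan, Finsupp.supported_iInter, comap_iInf]

end Semiring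

variable {ι K V : Type*} [DivisionRing K] [AddCommGroup V] [Module K V]

theorem finrank_span_image (b : Basis ι K V) (s : Set ι) [Fintype s] :
    finrank K (span K (b '' s)) = Fintype.card s := by
  rw [Set.image_eq_range]
  exact finrank_span_eq_card (b.linearIndependent.comp _ Subtype.val_injective)

theorem exists_apply_eq_of_ne_zero [Fintype ι] [FiniteDimensional K V]
    (hι : Fintype.card ι = finrank K V) (i₀ : ι) {v : V} (hv : v ≠ 0) :
    ∃ b : Basis ι K V, b i₀ = v := by
  classical
  have hli : LinearIndepOn K id {v} := .singleton hv
  let B := Basis.extend hli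
  have : Fintype (hli.extend (Set.subset_univ _)) := FiniteDimensional.fintypeBasisIndex B
  let e : ι ≃ hli.extend (Set.subset_univ _) :=
    Fintype.equivOfCardEq (hι.trans (finrank_eq_card_basis B))
  refine ⟨B.reindex (e.setValue i₀ ⟨v, subset_extend hli rfl⟩).symm, ?_⟩
  rw [reindex_apply, Equiv.symm_symm, Equiv.setValue_eq, extend_apply_self]

end Module.Basis

theorem splitting_subspaces_general (N : ℕ)
    (ψ : EuclideanSpace ℂ (Fin (2 ^ N))) (hψ : ‖ψ‖ = 1) :
    ∃ S : Fin N → Submodule ℂ (EuclideanSpace ℂ (Fin (2 ^ N))),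
      (∀ k, Module.finrank ℂ (S k) = 2 ^ (N - 1)) ∧
      (⨅ k, S k) = Submodule.span ℂ {ψ} := by
  have hψ0 : ψ ≠ 0 := by rintro rfl; simp at hψ
  have hcard : Fintype.card (Fin N → Bool) = finrank ℂ (EuclideanSpace ℂ (Fin (2 ^ N))) := by
    simp
  obtain ⟨b, hb⟩ := Basis.exists_apply_eq_of_ne_zero hcard (fun _ => false) hψ0
  have hfibres : ⋂ k, {f : Fin N → Bool | f k = false} = {fun _ => false} := by
    ext f
    simp [funext_iff]
  refine ⟨fun k => span ℂ (b '' {f | f k = false}), fun k => ?_, ?_⟩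
  · rw [b.finrank_span_image]
    exact (Fintype.card_subtype_apply_eq k false).trans (by simp)
  · rw [b.iInf_span_image, hfibres, Set.image_singleton, hb]

/-- **Splitting subspaces** (Lemma 3.1): any unit vector `ψ` in the Hilbert space
`ℂ^(2^N)` of an `N`-qubit register (`N ≥ 1`) is the unique unit-norm vector in the
intersection of `N` subspaces of dimension `2^(N-1)`. -/
theorem splitting_subspaces (N : ℕ) (hN : 1 ≤ N)
    (ψ : EuclideanSpace ℂ (Fin (2 ^ N))) (hψ : ‖ψ‖ = 1) :
    ∃ S : Fin N → Submodule ℂ (EuclideanSpace ℂ (Fin (2 ^ N))),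
      (∀ k, Module.finrank ℂ (S k) = 2 ^ (N - 1)) ∧
      (⨅ k, S k) = Submodule.span ℂ {ψ} :=
  splitting_subspaces_general N ψ hψ
end

section
/- Let Π be an orthogonal projection on ℂ^n, Π^⊥ = I − Π, and U_⊥ a unitary with U_⊥ Π^⊥ U_⊥† = Π. On ℂ^2 ⊗ ℂ^n (ancilla first), define U_tot = (|1⟩⟨1| ⊗ I_n + |0⟩⟨0| ⊗ U_⊥)(I_2 ⊗ Π + σ_x ⊗ Π^⊥), where σ_x is the Pauli X matrix. Then for every n×n matrix ρ, the partial trace over the ancilla of U_tot (|1⟩⟨1| ⊗ ρ) U_tot† equals Π ρ Π + U_⊥ Π^⊥ ρ Π^⊥ U_⊥†. Here the partial trace over the first (2-dimensional) factor of a (2n)×(2n) matrix, written in 2×2 block form with n×n blocks, is the sum of its two diagonal blocks. -/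
/-!
Read as a `2 × 2` matrix of `n × n` blocks over the ancilla, `U_tot = !![U P, U P^⊥; P^⊥, P]`.
The ancilla state `|1⟩⟨1|` selects the second block column, so tracing out the ancilla gives
`∑ K ρ Kᴴ` over the Kraus operators `K ∈ {U P^⊥, P}` of that column.
-/

open Matrix
open Kronecker

/-- Partial trace over the first (2-dimensional, ancilla) factor of a matrix on
`ℂ² ⊗ ℂⁿ`: the sum of the two diagonal `n × n` blocks. -/
noncomputable def trAncilla (n : ℕ) (M : Matrix (Fin 2 × Fin n) (Fin 2 × Fin n) ℂ) :
    Matrix (Fin n) (Fin n) ℂ :=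
  Matrix.of fun i j => ∑ a : Fin 2, M (a, i) (a, j)

namespace Matrix

theorem trace_mul_single_mul_conjTranspose {ι A : Type*} [Fintype ι] [DecidableEq ι]
    [NonUnitalSemiring A] [StarRing A] (M : Matrix ι ι A) (b : ι) (x : A) :
    trace (M * single b b x * Mᴴ) = ∑ a, M a b * x * star (M a b) := by
  simp [trace, mul_apply, single, ite_and, mul_assoc]

variable {I J K L R : Type*}

theorem comp_symm_kronecker [Mul R] (A : Matrix I J R) (B : Matrix K L R) :
    (comp I J K L R).symm (A ⊗ₖ B) = A.map (· • B) :=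
  rfl

theorem comp_symm_conjTranspose [Star R] (M : Matrix (I × K) (I × K) R) :
    (comp I I K K R).symm Mᴴ = ((comp I I K K R).symm M)ᴴ :=
  rfl

end Matrix

theorem trAncilla_eq_trace_comp_symm (n : ℕ) (M : Matrix (Fin 2 × Fin n) (Fin 2 × Fin n) ℂ) :
    trAncilla n M = trace ((comp _ _ _ _ _).symm M) := by
  ext i j
  simp [trAncilla, trace, Matrix.sum_apply]

theorem coherent_feedback_realizes_pumping_general (n : ℕ)
    (P : Matrix (Fin n) (Fin n) ℂ) (hP : P.IsHermitian)
    (U : Matrix (Fin n) (Fin n) ℂ)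
    (Utot : Matrix (Fin 2 × Fin n) (Fin 2 × Fin n) ℂ)
    (hUtot : Utot =
      (Matrix.single (1 : Fin 2) 1 (1 : ℂ) ⊗ₖ (1 : Matrix (Fin n) (Fin n) ℂ)
          + Matrix.single (0 : Fin 2) 0 (1 : ℂ) ⊗ₖ U)
        * ((1 : Matrix (Fin 2) (Fin 2) ℂ) ⊗ₖ P + !![0, 1; 1, 0] ⊗ₖ (1 - P)))
    (ρ : Matrix (Fin n) (Fin n) ℂ) :
    trAncilla n (Utot * (Matrix.single (1 : Fin 2) 1 (1 : ℂ) ⊗ₖ ρ) * Utotᴴ)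
      = P * ρ * P + U * (1 - P) * ρ * (1 - P) * Uᴴ := by
  set blocks := (compRingEquiv (Fin 2) (Fin n) ℂ).symm
  have hblocks : blocks Utot = !![U * P, U * (1 - P); 1 - P, P] := by
    simp only [blocks, hUtot, map_mul, map_add, compRingEquiv_symm_apply, comp_symm_kronecker]
    ext a b : 2
    fin_cases a <;> fin_cases b <;> simp [Matrix.mul_apply, Fin.sum_univ_two]
  have hstate : blocks (single 1 1 1 ⊗ₖ ρ) = single 1 1 ρ := by
    ext a b : 2
    fin_cases a <;> fin_cases b <;> simp [blocks]
  calc trAncilla n (Utot * (single 1 1 1 ⊗ₖ ρ) * Utotᴴ)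
      = trace (blocks Utot * single 1 1 ρ * (blocks Utot)ᴴ) := by
        rw [trAncilla_eq_trace_comp_symm, ← compRingEquiv_symm_apply, map_mul, map_mul, hstate]
        simp only [blocks, compRingEquiv_symm_apply, comp_symm_conjTranspose]
    _ = ∑ a, blocks Utot a 1 * ρ * star (blocks Utot a 1) :=
        trace_mul_single_mul_conjTranspose _ _ _
    _ = P * ρ * P + U * (1 - P) * ρ * (1 - P) * Uᴴ := by
        rw [hblocks]
        simp [Fin.sum_univ_two, star_eq_conjTranspose, hP.eq, add_comm, mul_assoc]

/-- Coherent-feedback implementation of the subspace-pumping map (steps (1)-(4)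
of the protocol): with the ancilla initialized in `|1⟩`, conjugating by
`U_tot = (|1⟩⟨1| ⊗ I + |0⟩⟨0| ⊗ U_⊥)(I ⊗ P + σ_x ⊗ P^⊥)` and tracing out the
ancilla realizes `E_S(ρ) = P ρ P + U_⊥ P^⊥ ρ P^⊥ U_⊥†`. -/
theorem coherent_feedback_realizes_pumping (n : ℕ)
    (P : Matrix (Fin n) (Fin n) ℂ) (hP : P.IsHermitian) (hP2 : P * P = P)
    (U : Matrix (Fin n) (Fin n) ℂ) (hU : U ∈ Matrix.unitaryGroup (Fin n) ℂ)
    (hUperp : U * (1 - P) * Uᴴ = P)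
    (Utot : Matrix (Fin 2 × Fin n) (Fin 2 × Fin n) ℂ)
    (hUtot : Utot =
      (Matrix.single (1 : Fin 2) 1 (1 : ℂ) ⊗ₖ (1 : Matrix (Fin n) (Fin n) ℂ)
          + Matrix.single (0 : Fin 2) 0 (1 : ℂ) ⊗ₖ U)
        * ((1 : Matrix (Fin 2) (Fin 2) ℂ) ⊗ₖ P + !![0, 1; 1, 0] ⊗ₖ (1 - P)))
    (ρ : Matrix (Fin n) (Fin n) ℂ) :
    trAncilla n (Utot * (Matrix.single (1 : Fin 2) 1 (1 : ℂ) ⊗ₖ ρ) * Utotᴴ)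
      = P * ρ * P + U * (1 - P) * ρ * (1 - P) * Uᴴ :=
  coherent_feedback_realizes_pumping_general n P hP U Utot hUtot ρ
end

section
/- Let |ψ⟩ be a unit vector in ℂ^n and let Π_1, …, Π_N be pairwise commuting orthogonal projections with ranges S_1, …, S_N satisfying ⋂_{ℓ=1}^{N} S_ℓ = span{|ψ⟩}. For each ℓ let U_ℓ be a unitary with U_ℓ (I − Π_ℓ) U_ℓ† = Π_ℓ and U_ℓ( (⋂_{k<ℓ} S_k) ∩ S_ℓ^⊥ ) ⊆ (⋂_{k<ℓ} S_k) ∩ S_ℓ, and define E_ℓ(ρ) = Π_ℓ ρ Π_ℓ + U_ℓ (I − Π_ℓ) ρ (I − Π_ℓ) U_ℓ†. Then for every density matrix ρ on ℂ^n, the composition satisfies E_N ∘ ⋯ ∘ E_1 (ρ) = |ψ⟩⟨ψ|. -/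
/-!
After the `ℓ`-th map the state is still Hermitian of trace one, and its range lies in
`S_0 ∩ ⋯ ∩ S_ℓ`: the term `P_ℓ ρ P_ℓ` keeps the range inside the earlier subspaces because
`P_ℓ` commutes with their projections, while `(1 - P_ℓ) ρ (1 - P_ℓ)` has range in those subspaces
and in `S_ℓᗮ`, which `U_ℓ` pumps into `S_ℓ` by assumption. After all `N` steps the range lies in
`span {ψ}`, and a Hermitian trace-one matrix with range in the span of a unit vector `ψ`
is `|ψ⟩⟨ψ|`.
-/

open Matrix
open scoped ComplexOrder

theorem Fin.foldl_induction {α : Sort*} {N : ℕ} (p : ℕ → α → Prop) (f : α → Fin N → α)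
    {x : α} (h0 : p 0 x) (hf : ∀ (i : Fin N) a, p i a → p (i + 1) (f a i)) :
    p N (Fin.foldl N f x) := by
  induction N with
  | zero => exact h0
  | succ N ih =>
    rw [Fin.foldl_succ_last]
    exact hf (Fin.last N) _ (ih (fun a i => f a i.castSucc) fun i a => hf i.castSucc a)

namespace Matrix

variable {𝕜 m : Type*} [RCLike 𝕜] [Fintype m] [DecidableEq m]

def subspacePump (P U σ : Matrix m m 𝕜) : Matrix m m 𝕜 :=
  P * σ * P + U * (1 - P) * σ * (1 - P) * Uᴴ

theorem IsHermitian.subspacePump {P σ : Matrix m m 𝕜} (hσ : σ.IsHermitian) (hP : P.IsHermitian)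
    (U : Matrix m m 𝕜) : (subspacePump P U σ).IsHermitian := by
  simp only [Matrix.subspacePump, IsHermitian, conjTranspose_add, conjTranspose_mul,
    conjTranspose_sub, conjTranspose_one, conjTranspose_conjTranspose, hP.eq, hσ.eq,
    Matrix.mul_assoc]

theorem trace_mul_mul_of_isIdempotentElem {R n : Type*} [CommSemiring R] [Fintype n]
    {A : Matrix n n R} (hA : IsIdempotentElem A) (σ : Matrix n n R) :
    (A * σ * A).trace = (σ * A).trace := by
  rw [trace_mul_cycle, hA.eq, trace_mul_comm]

theorem trace_subspacePump {P U : Matrix m m 𝕜} (hP : IsIdempotentElem P)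
    (hU : U ∈ unitaryGroup m 𝕜) (σ : Matrix m m 𝕜) : (subspacePump P U σ).trace = σ.trace := by
  have hconj : (U * (1 - P) * σ * (1 - P) * Uᴴ).trace = ((1 - P) * σ * (1 - P)).trace := by
    rw [trace_mul_comm, ← Matrix.mul_assoc, ← Matrix.mul_assoc, ← Matrix.mul_assoc,
      ← star_eq_conjTranspose, mem_unitaryGroup_iff'.mp hU, Matrix.one_mul]
  rw [subspacePump, trace_add, hconj, trace_mul_mul_of_isIdempotentElem hP,
    trace_mul_mul_of_isIdempotentElem hP.one_sub, ← trace_add,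
    ← Matrix.mul_add, add_sub_cancel, Matrix.mul_one]

theorem range_toEuclideanLin_mul (A B : Matrix m m 𝕜) :
    LinearMap.range (toEuclideanLin (A * B)) =
      (LinearMap.range (toEuclideanLin B)).map (toEuclideanLin A) := by
  rw [toLpLin_mul_same, LinearMap.range_comp]

theorem range_toEuclideanLin_mul_le (A B : Matrix m m 𝕜) :
    LinearMap.range (toEuclideanLin (A * B)) ≤ LinearMap.range (toEuclideanLin A) := by
  rw [toLpLin_mul_same]
  exact LinearMap.range_comp_le_range _ _

theorem map_range_toEuclideanLin_le_of_commute {A B : Matrix m m 𝕜} (h : Commute A B) :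
    (LinearMap.range (toEuclideanLin B)).map (toEuclideanLin A) ≤
      LinearMap.range (toEuclideanLin B) := by
  rw [← range_toEuclideanLin_mul, h.eq]
  exact range_toEuclideanLin_mul_le B A

theorem range_toEuclideanLin_one_sub_le {P : Matrix m m 𝕜} (hP : P.IsHermitian)
    (hPP : IsIdempotentElem P) :
    LinearMap.range (toEuclideanLin (1 - P)) ≤ (LinearMap.range (toEuclideanLin P))ᗮ := by
  rw [(isSymmetric_toEuclideanLin_iff.mpr hP).orthogonal_range, LinearMap.range_le_ker_iff,
    ← toLpLin_mul_same, Matrix.mul_sub, Matrix.mul_one, hPP.eq, sub_self, map_zero]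

theorem range_subspacePump_le {P U σ : Matrix m m 𝕜} {T : Submodule 𝕜 (EuclideanSpace 𝕜 m)}
    (hP : P.IsHermitian) (hPP : IsIdempotentElem P) (hPT : T.map (toEuclideanLin P) ≤ T)
    (hUT : (T ⊓ (LinearMap.range (toEuclideanLin P))ᗮ).map (toEuclideanLin U) ≤
      T ⊓ LinearMap.range (toEuclideanLin P))
    (hσ : LinearMap.range (toEuclideanLin σ) ≤ T) :
    LinearMap.range (toEuclideanLin (subspacePump P U σ)) ≤
      T ⊓ LinearMap.range (toEuclideanLin P) := by
  have hQT : T.map (toEuclideanLin (1 - P)) ≤ T ⊓ (LinearMap.range (toEuclideanLin P))ᗮ := by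
    refine le_inf ?_ (LinearMap.map_le_range.trans (range_toEuclideanLin_one_sub_le hP hPP))
    rintro _ ⟨x, hx, rfl⟩
    simpa using T.sub_mem hx (hPT ⟨x, hx, rfl⟩)
  have hPterm : LinearMap.range (toEuclideanLin (P * σ * P)) ≤
      T ⊓ LinearMap.range (toEuclideanLin P) := by
    refine (range_toEuclideanLin_mul_le _ _).trans ?_
    rw [range_toEuclideanLin_mul]
    exact le_inf ((Submodule.map_mono hσ).trans hPT) LinearMap.map_le_range
  have hUterm : LinearMap.range (toEuclideanLin (U * (1 - P) * σ * (1 - P) * Uᴴ)) ≤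
      T ⊓ LinearMap.range (toEuclideanLin P) := by
    refine ((range_toEuclideanLin_mul_le _ _).trans (range_toEuclideanLin_mul_le _ _)).trans ?_
    rw [Matrix.mul_assoc, range_toEuclideanLin_mul, range_toEuclideanLin_mul]
    exact (Submodule.map_mono ((Submodule.map_mono hσ).trans hQT)).trans hUT
  rw [subspacePump, map_add]
  exact (LinearMap.range_add_le _ _).trans (sup_le hPterm hUterm)

theorem eq_vecMulVec_of_range_le_span {σ : Matrix m m 𝕜} {ψ : EuclideanSpace 𝕜 m}
    (hψ : ‖ψ‖ = 1) (hσ : σ.IsHermitian) (htr : σ.trace = 1)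
    (hrange : LinearMap.range (toEuclideanLin σ) ≤ 𝕜 ∙ ψ) :
    σ = vecMulVec ψ.ofLp (star ψ.ofLp) := by
  set Q := vecMulVec ψ.ofLp (star ψ.ofLp)
  have hψψ : ψ.ofLp ⬝ᵥ star ψ.ofLp = 1 := by
    rw [← EuclideanSpace.inner_eq_star_dotProduct, inner_self_eq_norm_sq_to_K, hψ]
    simp
  have hQψ : toEuclideanLin Q ψ = ψ := by
    ext i
    simp [Q, toLpLin_apply, vecMulVec_mulVec, dotProduct_comm, hψψ]
  have hQσ : Q * σ = σ := by
    refine (toLpLin 2 2).injective (LinearMap.ext fun v => ?_)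
    obtain ⟨c, hc⟩ := Submodule.mem_span_singleton.mp (hrange ⟨v, rfl⟩)
    rw [toLpLin_mul_same, LinearMap.comp_apply, ← hc, map_smul, hQψ]
  have hσQ : σ * Q = σ := by
    simpa [Q, hσ.eq] using congrArg conjTranspose hQσ
  obtain ⟨c, hc⟩ := Submodule.mem_span_singleton.mp (hrange ⟨ψ, rfl⟩)
  have hσc : σ = c • Q := by
    have hσψ : σ *ᵥ ψ.ofLp = c • ψ.ofLp := congrArg WithLp.ofLp hc.symm
    rw [← hσQ, mul_vecMulVec, hσψ, smul_vecMulVec]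
  have hc1 : c = 1 := by
    rwa [hσc, trace_smul, trace_vecMulVec, hψψ, smul_eq_mul, mul_one] at htr
  rw [hσc, hc1, one_smul]

end Matrix

theorem splitting_subspace_preparation_general (n N : ℕ)
    (ψ : EuclideanSpace ℂ (Fin n)) (hψ : ‖ψ‖ = 1)
    (P : Fin N → Matrix (Fin n) (Fin n) ℂ)
    (hP : ∀ ℓ, (P ℓ).IsHermitian ∧ P ℓ * P ℓ = P ℓ)
    (hPcomm : ∀ k ℓ, P k * P ℓ = P ℓ * P k)
    (S : Fin N → Submodule ℂ (EuclideanSpace ℂ (Fin n)))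
    (hS : ∀ ℓ, S ℓ = LinearMap.range (Matrix.toEuclideanLin (P ℓ)))
    (hInt : (⨅ ℓ, S ℓ) = Submodule.span ℂ {ψ})
    (U : Fin N → Matrix (Fin n) (Fin n) ℂ)
    (hU : ∀ ℓ, U ℓ ∈ Matrix.unitaryGroup (Fin n) ℂ)
    (hUmap : ∀ ℓ : Fin N,
      (((⨅ k : Fin N, ⨅ _ : k < ℓ, S k) ⊓ (S ℓ)ᗮ).map
          (Matrix.toEuclideanLin (U ℓ)))
        ≤ (⨅ k : Fin N, ⨅ _ : k < ℓ, S k) ⊓ S ℓ)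
    (ρ : Matrix (Fin n) (Fin n) ℂ) (hρ : ρ.PosSemidef) (hρtr : ρ.trace = 1) :
    Fin.foldl N
        (fun σ ℓ => P ℓ * σ * P ℓ + U ℓ * (1 - P ℓ) * σ * (1 - P ℓ) * (U ℓ)ᴴ) ρ
      = Matrix.of (fun i j => ψ i * star (ψ j)) := by
  show Fin.foldl N (fun σ ℓ => subspacePump (P ℓ) (U ℓ) σ) ρ = vecMulVec ψ.ofLp (star ψ.ofLp)
  obtain rfl : S = fun ℓ => LinearMap.range (toEuclideanLin (P ℓ)) := funext hS
  let T (i : ℕ) := ⨅ k : Fin N, ⨅ _ : (k : ℕ) < i, LinearMap.range (toEuclideanLin (P k))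
  have hPT (ℓ : Fin N) : (T ℓ).map (toEuclideanLin (P ℓ)) ≤ T ℓ :=
    le_iInf₂ fun k hk => (Submodule.map_mono (iInf₂_le k hk)).trans
      (map_range_toEuclideanLin_le_of_commute (hPcomm ℓ k))
  have hTsucc (ℓ : Fin N) : T ℓ ⊓ LinearMap.range (toEuclideanLin (P ℓ)) ≤ T (ℓ + 1) :=
    le_iInf₂ fun k hk => (Nat.lt_succ_iff_lt_or_eq.mp hk).elim
      (fun hkℓ => inf_le_left.trans (iInf₂_le k hkℓ)) fun hkℓ => Fin.ext hkℓ ▸ inf_le_right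
  obtain ⟨hherm, htr, hrange⟩ := Fin.foldl_induction
    (fun i σ => σ.IsHermitian ∧ σ.trace = 1 ∧ LinearMap.range (toEuclideanLin σ) ≤ T i)
    (fun σ ℓ => subspacePump (P ℓ) (U ℓ) σ) ⟨hρ.1, hρtr, by simp [T]⟩
    fun ℓ σ ⟨hσ, hσtr, hσT⟩ => ⟨hσ.subspacePump (hP ℓ).1 _,
      (trace_subspacePump (hP ℓ).2 (hU ℓ) σ).trans hσtr,
      (range_subspacePump_le (hP ℓ).1 (hP ℓ).2 (hPT ℓ) (hUmap ℓ) hσT).trans (hTsucc ℓ)⟩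
  have hTN : T N ≤ Submodule.span ℂ {ψ} :=
    (le_iInf fun k => iInf₂_le k k.isLt).trans hInt.le
  exact eq_vecMulVec_of_range_le_span hψ hherm htr (hrange.trans hTN)

/-- Theorem 3.2 of the paper: given a splitting-subspace description
`⋂_ℓ S_ℓ = span{ψ}` of a unit vector `ψ` by ranges `S_ℓ` of pairwise commuting
orthogonal projections `P ℓ`, and unitaries `U ℓ` with `U_ℓ (1-P_ℓ) U_ℓ† = P_ℓ`
mapping `(⋂_{k<ℓ} S_k) ∩ S_ℓ^⊥` into `(⋂_{k<ℓ} S_k) ∩ S_ℓ`, the composition of the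
`N` subspace-pumping maps `E_ℓ(ρ) = P_ℓ ρ P_ℓ + U_ℓ (1-P_ℓ) ρ (1-P_ℓ) U_ℓ†`
(applied in order `E_N ∘ ⋯ ∘ E_1`) sends every density matrix to `|ψ⟩⟨ψ|`. -/
theorem splitting_subspace_preparation (n N : ℕ)
    (ψ : EuclideanSpace ℂ (Fin n)) (hψ : ‖ψ‖ = 1)
    (P : Fin N → Matrix (Fin n) (Fin n) ℂ)
    (hP : ∀ ℓ, (P ℓ).IsHermitian ∧ P ℓ * P ℓ = P ℓ)
    (hPcomm : ∀ k ℓ, P k * P ℓ = P ℓ * P k)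
    (S : Fin N → Submodule ℂ (EuclideanSpace ℂ (Fin n)))
    (hS : ∀ ℓ, S ℓ = LinearMap.range (Matrix.toEuclideanLin (P ℓ)))
    (hInt : (⨅ ℓ, S ℓ) = Submodule.span ℂ {ψ})
    (U : Fin N → Matrix (Fin n) (Fin n) ℂ)
    (hU : ∀ ℓ, U ℓ ∈ Matrix.unitaryGroup (Fin n) ℂ)
    (hUperp : ∀ ℓ, U ℓ * (1 - P ℓ) * (U ℓ)ᴴ = P ℓ)
    (hUmap : ∀ ℓ : Fin N,
      (((⨅ k : Fin N, ⨅ _ : k < ℓ, S k) ⊓ (S ℓ)ᗮ).map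
          (Matrix.toEuclideanLin (U ℓ)))
        ≤ (⨅ k : Fin N, ⨅ _ : k < ℓ, S k) ⊓ S ℓ)
    (ρ : Matrix (Fin n) (Fin n) ℂ) (hρ : ρ.PosSemidef) (hρtr : ρ.trace = 1) :
    Fin.foldl N
        (fun σ ℓ => P ℓ * σ * P ℓ + U ℓ * (1 - P ℓ) * σ * (1 - P ℓ) * (U ℓ)ᴴ) ρ
      = Matrix.of (fun i j => ψ i * star (ψ j)) :=
  splitting_subspace_preparation_general n N ψ hψ P hP hPcomm S hS hInt U hU hUmap ρ hρ hρtr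
end

section
/- Let Π be an orthogonal projection on ℂ^n with Π^⊥ = I − Π, and U_⊥ a unitary with U_⊥ Π^⊥ U_⊥† = Π. Let D and O be 2×2 unitary matrices with D diagonal and O off-diagonal (zero diagonal entries) in the standard basis. On ℂ^2 ⊗ ℂ^n define Ũ = (|1⟩⟨1| ⊗ I_n + |0⟩⟨0| ⊗ U_⊥)(D ⊗ Π + O ⊗ Π^⊥). Then Ũ is unitary and, for every n×n matrix ρ, the partial trace over the first factor of Ũ (|1⟩⟨1| ⊗ ρ) Ũ† equals Π ρ Π + U_⊥ Π^⊥ ρ Π^⊥ U_⊥†. Thus the reduced system dynamics is unaffected by the ancilla phases introduced by D and O. -/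
/-!
`Ũ` is the product of the controlled gate `|1⟩⟨1| ⊗ I + |0⟩⟨0| ⊗ U_⊥`, block diagonal with
unitary blocks, and `D ⊗ Π + O ⊗ Π^⊥`, which is unitary because `Π Π^⊥ = 0` and
`Π + Π^⊥ = I`. As `|1⟩⟨1| ⊗ ρ` only lives on the ancilla state `|1⟩`, the diagonal blocks of
`Ũ (|1⟩⟨1| ⊗ ρ) Ũ†` are `K_a ρ K_a†`, where `K_a` is the `(a, 1)` block of `Ũ`. Since `D` is
diagonal and `O` off-diagonal, `K_1 = D₁₁ Π` and `K_0 = O₀₁ U_⊥ Π^⊥`, and the phases `D₁₁`, `O₀₁`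
have modulus one, so they cancel against their conjugates.
-/

open Matrix
open Kronecker

namespace Matrix

variable {k l m n p q : Type*}

theorem submatrix_prodMk_mul [Fintype m] [Fintype p] {α : Type*} [NonUnitalNonAssocSemiring α]
    (M : Matrix (l × n) (m × p) α) (N : Matrix (m × p) (k × q) α) (a : l) (c : k) :
    (M * N).submatrix (Prod.mk a) (Prod.mk c) =
      ∑ b, M.submatrix (Prod.mk a) (Prod.mk b) * N.submatrix (Prod.mk b) (Prod.mk c) := by
  ext i j
  simp [mul_apply, Fintype.sum_prod_type, Matrix.sum_apply]

theorem submatrix_prodMk_kronecker {α : Type*} [Mul α] (A : Matrix l m α) (B : Matrix n p α)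
    (a : l) (b : m) :
    (A ⊗ₖ B).submatrix (Prod.mk a) (Prod.mk b) = A a b • B := by
  ext i j
  simp

theorem star_mul_self_eq_one_of_mem_unitaryGroup [Fintype n] [DecidableEq n]
    {U : Matrix n n ℂ} (hU : U ∈ unitaryGroup n ℂ) {i k : n} (hcol : ∀ j ≠ k, U j i = 0) :
    star (U k i) * U k i = 1 := by
  have h := congrFun (congrFun (mem_unitaryGroup_iff'.mp hU) i) i
  rwa [mul_apply, Finset.sum_eq_single k (fun j _ hj => by simp [hcol j hj]) (by simp),
    star_apply, one_apply_eq] at h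

theorem smul_mul_mul_conjTranspose_smul [Fintype m] [Fintype n] {c : ℂ} (hc : star c * c = 1)
    (A : Matrix m n ℂ) (ρ : Matrix n n ℂ) :
    (c • A) * ρ * (c • A)ᴴ = A * ρ * Aᴴ := by
  rw [conjTranspose_smul, smul_mul, smul_mul, Matrix.mul_smul, smul_smul, mul_comm c, hc,
    one_smul]

theorem kronecker_add_kronecker_one_sub_mem_unitaryGroup [Fintype m] [DecidableEq m]
    [Fintype n] [DecidableEq n] {P : Matrix n n ℂ} (hP : P.IsHermitian) (hP2 : P * P = P)
    {D O : Matrix m m ℂ} (hD : D ∈ unitaryGroup m ℂ) (hO : O ∈ unitaryGroup m ℂ) :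
    D ⊗ₖ P + O ⊗ₖ (1 - P) ∈ unitaryGroup (m × n) ℂ := by
  have hPQ : P * (1 - P) = 0 := by rw [mul_sub, mul_one, hP2, sub_self]
  have hQP : (1 - P) * P = 0 := by rw [sub_mul, one_mul, hP2, sub_self]
  have hQ2 : (1 - P) * (1 - P) = 1 - P := by rw [sub_mul, one_mul, hPQ, sub_zero]
  have hQ : (1 - P).IsHermitian := isHermitian_one.sub hP
  rw [mem_unitaryGroup_iff, star_eq_conjTranspose] at hD hO ⊢
  rw [conjTranspose_add, conjTranspose_kronecker, conjTranspose_kronecker, hP.eq, hQ.eq]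
  simp only [add_mul, mul_add, ← mul_kronecker_mul, hD, hO, hP2, hPQ, hQP, hQ2, kronecker_zero,
    add_zero, zero_add, ← kronecker_add, add_sub_cancel, one_kronecker_one]

end Matrix

def controlledOnZero {n : Type*} [DecidableEq n] (U : Matrix n n ℂ) :
    Matrix (Fin 2 × n) (Fin 2 × n) ℂ :=
  single 1 1 1 ⊗ₖ 1 + single 0 0 1 ⊗ₖ U

section controlledOnZero

variable {n : Type*} [Fintype n] [DecidableEq n]

theorem controlledOnZero_mem_unitaryGroup {U : Matrix n n ℂ} (hU : U ∈ unitaryGroup n ℂ) :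
    controlledOnZero U ∈ unitaryGroup (Fin 2 × n) ℂ := by
  rw [mem_unitaryGroup_iff, star_eq_conjTranspose] at hU ⊢
  have hsum : single (1 : Fin 2) (1 : Fin 2) (1 : ℂ) + single 0 0 1 = 1 := by
    ext i j; fin_cases i <;> fin_cases j <;> simp
  simp only [controlledOnZero, conjTranspose_add, conjTranspose_kronecker, conjTranspose_single,
    star_one, conjTranspose_one, add_mul, mul_add, ← mul_kronecker_mul, single_mul_single_same,
    mul_one, hU, single_mul_single_of_ne _ _ _ _ (by decide : (1 : Fin 2) ≠ 0),
    single_mul_single_of_ne _ _ _ _ (by decide : (0 : Fin 2) ≠ 1), zero_kronecker, add_zero,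
    zero_add, ← add_kronecker, hsum, one_kronecker_one]

theorem submatrix_controlledOnZero_mul_one (U : Matrix n n ℂ)
    (M : Matrix (Fin 2 × n) (Fin 2 × n) ℂ) (b : Fin 2) :
    (controlledOnZero U * M).submatrix (Prod.mk 1) (Prod.mk b) =
      M.submatrix (Prod.mk 1) (Prod.mk b) := by
  simp [submatrix_prodMk_mul, controlledOnZero, Fin.sum_univ_two, submatrix_add,
    submatrix_prodMk_kronecker]

theorem submatrix_controlledOnZero_mul_zero (U : Matrix n n ℂ)
    (M : Matrix (Fin 2 × n) (Fin 2 × n) ℂ) (b : Fin 2) :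
    (controlledOnZero U * M).submatrix (Prod.mk 0) (Prod.mk b) =
      U * M.submatrix (Prod.mk 0) (Prod.mk b) := by
  simp [submatrix_prodMk_mul, controlledOnZero, Fin.sum_univ_two, submatrix_add,
    submatrix_prodMk_kronecker]

end controlledOnZero

theorem trAncilla_eq_sum_submatrix (n : ℕ) (M : Matrix (Fin 2 × Fin n) (Fin 2 × Fin n) ℂ) :
    trAncilla n M = ∑ a, M.submatrix (Prod.mk a) (Prod.mk a) := by
  ext i j
  simp [trAncilla, Matrix.sum_apply]

theorem trAncilla_mul_single_kronecker_mul_conjTranspose (n : ℕ)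
    (K : Matrix (Fin 2 × Fin n) (Fin 2 × Fin n) ℂ) (b : Fin 2) (ρ : Matrix (Fin n) (Fin n) ℂ) :
    trAncilla n (K * (single b b 1 ⊗ₖ ρ) * Kᴴ) =
      ∑ a, K.submatrix (Prod.mk a) (Prod.mk b) * ρ * (K.submatrix (Prod.mk a) (Prod.mk b))ᴴ := by
  fin_cases b <;> simp [trAncilla_eq_sum_submatrix, submatrix_prodMk_mul,
    submatrix_prodMk_kronecker, conjTranspose_submatrix, Fin.sum_univ_two]

theorem ancilla_phases_do_not_matter_general (n : ℕ)
    (P : Matrix (Fin n) (Fin n) ℂ) (hP : P.IsHermitian) (hP2 : P * P = P)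
    (U : Matrix (Fin n) (Fin n) ℂ) (hU : U ∈ Matrix.unitaryGroup (Fin n) ℂ)
    (D O : Matrix (Fin 2) (Fin 2) ℂ)
    (hD : D ∈ Matrix.unitaryGroup (Fin 2) ℂ) (hDdiag : D.IsDiag)
    (hO : O ∈ Matrix.unitaryGroup (Fin 2) ℂ) (hOoff : ∀ i, O i i = 0)
    (Ut : Matrix (Fin 2 × Fin n) (Fin 2 × Fin n) ℂ)
    (hUt : Ut =
      (single (1 : Fin 2) 1 (1 : ℂ) ⊗ₖ (1 : Matrix (Fin n) (Fin n) ℂ)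
          + single (0 : Fin 2) 0 (1 : ℂ) ⊗ₖ U)
        * (D ⊗ₖ P + O ⊗ₖ (1 - P))) :
    Ut ∈ Matrix.unitaryGroup (Fin 2 × Fin n) ℂ ∧
    ∀ ρ : Matrix (Fin n) (Fin n) ℂ,
      trAncilla n (Ut * (single (1 : Fin 2) 1 (1 : ℂ) ⊗ₖ ρ) * Utᴴ)
        = P * ρ * P + U * (1 - P) * ρ * (1 - P) * Uᴴ := by
  change Ut = controlledOnZero U * (D ⊗ₖ P + O ⊗ₖ (1 - P)) at hUt
  subst hUt
  refine ⟨mul_mem (controlledOnZero_mem_unitaryGroup hU)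
    (kronecker_add_kronecker_one_sub_mem_unitaryGroup hP hP2 hD hO), fun ρ => ?_⟩
  have hD1 : star (D 1 1) * D 1 1 = 1 :=
    star_mul_self_eq_one_of_mem_unitaryGroup hD fun j hj => hDdiag hj
  have hO1 : star (O 0 1) * O 0 1 = 1 :=
    star_mul_self_eq_one_of_mem_unitaryGroup hO fun j hj => by
      rw [Fin.eq_one_of_ne_zero j hj, hOoff]
  rw [trAncilla_mul_single_kronecker_mul_conjTranspose, Fin.sum_univ_two,
    submatrix_controlledOnZero_mul_zero, submatrix_controlledOnZero_mul_one, add_comm]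
  simp only [submatrix_add, Pi.add_apply, submatrix_prodMk_kronecker,
    hDdiag (by decide : (0 : Fin 2) ≠ 1), hOoff, zero_smul, add_zero, zero_add, Matrix.mul_smul]
  rw [smul_mul_mul_conjTranspose_smul hD1, smul_mul_mul_conjTranspose_smul hO1, hP.eq,
    conjTranspose_mul, (isHermitian_one.sub hP).eq]
  simp only [Matrix.mul_assoc]

/-- Flexibility of the effective entangling operations (Eq. (5)): replacing the
controlled-not pair by `Ũ = (|1⟩⟨1| ⊗ I + |0⟩⟨0| ⊗ U_⊥)(D ⊗ P + O ⊗ P^⊥)`, with `D`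
diagonal unitary and `O` off-diagonal unitary on the ancilla, still yields a unitary
whose ancilla-traced action on `|1⟩⟨1| ⊗ ρ` is the same subspace-pumping map
`E_S(ρ) = P ρ P + U_⊥ P^⊥ ρ P^⊥ U_⊥†`: the ancilla phases do not affect the
reduced system dynamics. -/
theorem ancilla_phases_do_not_matter (n : ℕ)
    (P : Matrix (Fin n) (Fin n) ℂ) (hP : P.IsHermitian) (hP2 : P * P = P)
    (U : Matrix (Fin n) (Fin n) ℂ) (hU : U ∈ Matrix.unitaryGroup (Fin n) ℂ)
    (hUperp : U * (1 - P) * Uᴴ = P)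
    (D O : Matrix (Fin 2) (Fin 2) ℂ)
    (hD : D ∈ Matrix.unitaryGroup (Fin 2) ℂ) (hDdiag : D.IsDiag)
    (hO : O ∈ Matrix.unitaryGroup (Fin 2) ℂ) (hOoff : ∀ i, O i i = 0)
    (Ut : Matrix (Fin 2 × Fin n) (Fin 2 × Fin n) ℂ)
    (hUt : Ut =
      (single (1 : Fin 2) 1 (1 : ℂ) ⊗ₖ (1 : Matrix (Fin n) (Fin n) ℂ)
          + single (0 : Fin 2) 0 (1 : ℂ) ⊗ₖ U)
        * (D ⊗ₖ P + O ⊗ₖ (1 - P))) :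
    Ut ∈ Matrix.unitaryGroup (Fin 2 × Fin n) ℂ ∧
    ∀ ρ : Matrix (Fin n) (Fin n) ℂ,
      trAncilla n (Ut * (single (1 : Fin 2) 1 (1 : ℂ) ⊗ₖ ρ) * Utᴴ)
        = P * ρ * P + U * (1 - P) * ρ * (1 - P) * Uᴴ :=
  ancilla_phases_do_not_matter_general n P hP hP2 U hU D O hD hDdiag hO hOoff Ut hUt
end

section
/- The three-qubit Mølmer–Sørensen gate U_{X²}(π/2) := exp(−i(π/8)(X⊗I₂⊗I₂ + I₂⊗X⊗I₂ + I₂⊗I₂⊗X)²), an 8×8 unitary on ℂ^2 ⊗ ℂ^4 (control qubit first), factors as U_{X²}(π/2) = (I₂ ⊗ U''_X)(I₂ ⊗ Π₋ + X ⊗ Π₊), where Π_± = (I₄ ± X⊗X)/2 are the orthogonal projectors onto the ±1 eigenspaces of X⊗X on the two system qubits, and U''_X = (1/2) e^{−iπ/8} · M_X with M_X the 4×4 matrix having all diagonal entries equal to 1 and all off-diagonal entries equal to −1. -/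
open Matrix
open Kronecker

/-- Pauli X. -/
def PX : Matrix (Fin 2) (Fin 2) ℂ := !![0, 1; 1, 0]

/-- The collective spin operator `S_x = X₁ + X₂ + X₃` on three qubits
(control qubit first). -/
def Sx3 : Matrix (Fin 2 × (Fin 2 × Fin 2)) (Fin 2 × (Fin 2 × Fin 2)) ℂ :=
  PX ⊗ₖ ((1 : Matrix (Fin 2) (Fin 2) ℂ) ⊗ₖ (1 : Matrix (Fin 2) (Fin 2) ℂ))
    + (1 : Matrix (Fin 2) (Fin 2) ℂ) ⊗ₖ (PX ⊗ₖ (1 : Matrix (Fin 2) (Fin 2) ℂ))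
    + (1 : Matrix (Fin 2) (Fin 2) ℂ) ⊗ₖ ((1 : Matrix (Fin 2) (Fin 2) ℂ) ⊗ₖ PX)

/-- The three-qubit Mølmer–Sørensen gate `U_{X²}(π/2) = exp(−i(π/8) S_x²)`. -/
noncomputable def UX2 : Matrix (Fin 2 × (Fin 2 × Fin 2)) (Fin 2 × (Fin 2 × Fin 2)) ℂ :=
  NormedSpace.exp ((-(Complex.I) * (Real.pi / 8)) • (Sx3 * Sx3))

/-- The projectors onto the `±1` eigenspaces of `X⊗X` on the two system qubits. -/
noncomputable def ProjXp : Matrix (Fin 2 × Fin 2) (Fin 2 × Fin 2) ℂ :=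
  ((2 : ℂ)⁻¹) • ((1 : Matrix (Fin 2 × Fin 2) (Fin 2 × Fin 2) ℂ) + PX ⊗ₖ PX)

noncomputable def ProjXm : Matrix (Fin 2 × Fin 2) (Fin 2 × Fin 2) ℂ :=
  ((2 : ℂ)⁻¹) • ((1 : Matrix (Fin 2 × Fin 2) (Fin 2 × Fin 2) ℂ) - PX ⊗ₖ PX)

/-- The 4×4 matrix with diagonal entries `1` and off-diagonal entries `−1`. -/
def MX : Matrix (Fin 2 × Fin 2) (Fin 2 × Fin 2) ℂ :=
  Matrix.of fun p q => if p = q then 1 else -1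

/-- The residual unitary `U''_X = (1/2) e^{−iπ/8} M_X`. -/
noncomputable def UX'' : Matrix (Fin 2 × Fin 2) (Fin 2 × Fin 2) ℂ :=
  ((2 : ℂ)⁻¹ * Complex.exp (-(Complex.I) * (Real.pi / 8))) • MX

/-!
Write `X₁, X₂, X₃` for Pauli `X` acting on the three qubits and `Q = X₁X₂ + X₁X₃ + X₂X₃`.
Since the `Xᵢ` are commuting involutions, `Sₓ² = 3 + 2Q` and `Q² = 3 + 2Q`, so `P = (1 + Q)/4`
is a projector and `Sₓ² = (1 - P) + 9P`. The exponential of such a spectral combination is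
`e^{c}(1 - P) + e^{9c}P`, and for `c = -iπ/8` we have `e^{9c} = -e^{c}`, so the gate equals
`e^{-iπ/8}(1 - Q)/2`. On the other side `M_X = 1 - X⊗1 - 1⊗X - X⊗X`, which multiplies
the projectors to `M_X Π₋ = 1 - X⊗X` and `M_X Π₊ = -(X⊗1 + 1⊗X)`; assembling the conditional
gate gives the same `(1 - Q)/2`.
-/

open NormedSpace

section Idempotent

variable {𝕂 A : Type*}

theorem IsIdempotentElem.pow_smul_one_sub_add_smul [CommRing 𝕂] [Ring A] [Algebra 𝕂 A]
    {P : A} (hP : IsIdempotentElem P) (a b : 𝕂) (n : ℕ) :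
    (a • (1 - P) + b • P) ^ n = a ^ n • (1 - P) + b ^ n • P := by
  have h₁ : (1 - P) * (1 - P) = 1 - P := hP.one_sub.eq
  have h₂ : (1 - P) * P = 0 := by rw [sub_mul, one_mul, hP.eq, sub_self]
  have h₃ : P * (1 - P) = 0 := by rw [mul_sub, mul_one, hP.eq, sub_self]
  induction n with
  | zero => simp
  | succ n ih =>
    simp only [pow_succ, ih, add_mul, mul_add, smul_mul_smul_comm, h₁, h₂, h₃, hP.eq, smul_zero]
    module

theorem IsIdempotentElem.exp_smul_one_sub_add_smul [RCLike 𝕂] [Ring A] [Algebra 𝕂 A]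
    [TopologicalSpace A] [IsTopologicalRing A] [ContinuousSMul 𝕂 A] [T2Space A]
    {P : A} (hP : IsIdempotentElem P) (a b : 𝕂) :
    exp (a • (1 - P) + b • P) = exp a • (1 - P) + exp b • P := by
  rw [exp_eq_tsum 𝕂]
  refine HasSum.tsum_eq ?_
  simp only [hP.pow_smul_one_sub_add_smul, smul_add, smul_smul]
  exact ((exp_series_hasSum_exp' (𝕂 := 𝕂) a).smul_const _).add
    ((exp_series_hasSum_exp' (𝕂 := 𝕂) b).smul_const _)

end Idempotent

theorem Matrix.kronecker_sub {R l m n p : Type*} [NonUnitalNonAssocRing R]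
    (A : Matrix l m R) (B₁ B₂ : Matrix n p R) : A ⊗ₖ (B₁ - B₂) = A ⊗ₖ B₁ - A ⊗ₖ B₂ := by
  ext; simp [mul_sub]

theorem Matrix.kronecker_neg {R l m n p : Type*} [NonUnitalNonAssocRing R]
    (A : Matrix l m R) (B : Matrix n p R) : A ⊗ₖ (-B) = -(A ⊗ₖ B) := by
  ext; simp

theorem PX_mul_self : PX * PX = 1 := by
  simp [PX, Matrix.one_fin_two]

def Qx3 : Matrix (Fin 2 × (Fin 2 × Fin 2)) (Fin 2 × (Fin 2 × Fin 2)) ℂ :=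
  PX ⊗ₖ (PX ⊗ₖ 1) + PX ⊗ₖ (1 ⊗ₖ PX) + 1 ⊗ₖ (PX ⊗ₖ PX)

theorem Sx3_mul_self : Sx3 * Sx3 = (3 : ℂ) • 1 + (2 : ℂ) • Qx3 := by
  simp only [Sx3, Qx3, add_mul, mul_add, ← mul_kronecker_mul, PX_mul_self, one_mul, mul_one,
    one_kronecker_one]
  module

theorem Qx3_mul_self : Qx3 * Qx3 = (3 : ℂ) • 1 + (2 : ℂ) • Qx3 := by
  simp only [Qx3, add_mul, mul_add, ← mul_kronecker_mul, PX_mul_self, one_mul, mul_one,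
    one_kronecker_one]
  module

noncomputable def ProjSx9 : Matrix (Fin 2 × (Fin 2 × Fin 2)) (Fin 2 × (Fin 2 × Fin 2)) ℂ :=
  (4 : ℂ)⁻¹ • (1 + Qx3)

theorem isIdempotentElem_ProjSx9 : IsIdempotentElem ProjSx9 := by
  rw [IsIdempotentElem, ProjSx9, smul_mul_smul_comm, add_mul, mul_add, mul_add, Qx3_mul_self,
    one_mul, mul_one, one_mul]
  module

theorem Sx3_mul_self_eq_spectral :
    Sx3 * Sx3 = (1 : ℂ) • (1 - ProjSx9) + (9 : ℂ) • ProjSx9 := by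
  rw [Sx3_mul_self, ProjSx9]
  module

theorem UX2_eq : UX2 = ((2 : ℂ)⁻¹ * Complex.exp (-(Complex.I) * (Real.pi / 8))) • (1 - Qx3) := by
  have h9 : Complex.exp (-(Complex.I) * (Real.pi / 8) * 9)
      = -Complex.exp (-(Complex.I) * (Real.pi / 8) * 1) := by
    rw [← Complex.exp_sub_pi_mul_I]; ring_nf
  rw [UX2, Sx3_mul_self_eq_spectral, smul_add, smul_smul, smul_smul,
    IsIdempotentElem.exp_smul_one_sub_add_smul isIdempotentElem_ProjSx9,
    ← Complex.exp_eq_exp_ℂ, h9, mul_one, ProjSx9]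
  module

theorem MX_eq : MX = 1 - PX ⊗ₖ 1 - 1 ⊗ₖ PX - PX ⊗ₖ PX := by
  ext ⟨a, b⟩ ⟨c, d⟩
  fin_cases a <;> fin_cases b <;> fin_cases c <;> fin_cases d <;> simp [MX, PX]

theorem MX_mul_ProjXm : MX * ProjXm = 1 - PX ⊗ₖ PX := by
  simp only [MX_eq, ProjXm, mul_smul_comm, sub_mul, mul_sub, mul_one, one_mul,
    ← mul_kronecker_mul, PX_mul_self, one_kronecker_one]
  module

theorem MX_mul_ProjXp : MX * ProjXp = -(PX ⊗ₖ 1 + 1 ⊗ₖ PX) := by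
  simp only [MX_eq, ProjXp, mul_smul_comm, sub_mul, mul_add, mul_one, one_mul,
    ← mul_kronecker_mul, PX_mul_self, one_kronecker_one]
  module

theorem one_kronecker_MX_mul :
    ((1 : Matrix (Fin 2) (Fin 2) ℂ) ⊗ₖ MX) *
      ((1 : Matrix (Fin 2) (Fin 2) ℂ) ⊗ₖ ProjXm + PX ⊗ₖ ProjXp) = 1 - Qx3 := by
  rw [mul_add, ← mul_kronecker_mul, ← mul_kronecker_mul, one_mul, one_mul, MX_mul_ProjXm,
    MX_mul_ProjXp, kronecker_sub, kronecker_neg, kronecker_add, one_kronecker_one, Qx3]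
  abel

/-- Decomposition of the Mølmer–Sørensen gate `U_{X²}(π/2)` into a residual local
unitary `I₂ ⊗ U''_X` and the conditional gate `C^X_out = I₂ ⊗ Π₋ + X ⊗ Π₊`. -/
theorem MS_gate_X_decomposition :
    UX2 = ((1 : Matrix (Fin 2) (Fin 2) ℂ) ⊗ₖ UX'') *
      ((1 : Matrix (Fin 2) (Fin 2) ℂ) ⊗ₖ ProjXm + PX ⊗ₖ ProjXp) := by
  rw [UX2_eq, UX'', kronecker_smul, smul_mul_assoc, one_kronecker_MX_mul]
end
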